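/- arXiv:2412.11424 — 2 statements merged into one kernel-verified Lean document; each statement's English description precedes it below -/
import Mathlib

section
/- The sharp Hardy inequality in dimension $n \ge 3$: for all $u \in C_c^\infty(\mathbb{R}^n \setminus \{0\})$, $\left(\frac{n-2}{2}\right)^2 \int_{\mathbb{R}^n} \frac{|u(x)|^2}{|x|^2}\,dx \le \int_{\mathbb{R}^n} |\nabla u(x)|^2\,dx$. -/
open MeasureTheory Set

/-- Integral of the derivative of a compactly supported `C¹` function on `ℝ` is zero. -/
lemma hardy_aux_integral_deriv_eq_zero {f : ℝ → ℝ} (hf : ContDiff ℝ 1 f)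
    (hfc : HasCompactSupport f) : ∫ x : ℝ, deriv f x = 0 := by
  have hint : Integrable (deriv f) :=
    ((hf.continuous_deriv le_rfl).integrable_of_hasCompactSupport hfc.deriv)
  rw [← intervalIntegral.integral_Iic_add_Ioi (b := (0:ℝ))
      hint.integrableOn hint.integrableOn,
    hfc.integral_Iic_deriv_eq hf 0, hfc.integral_Ioi_deriv_eq hf 0]
  ring

/-- Line integral of a partial derivative along a coordinate line is zero. -/
lemma hardy_aux_line_integral {m : ℕ} {g : (Fin (m+1) → ℝ) → ℝ}
    (hg : ContDiff ℝ 1 g) (hgc : HasCompactSupport g) (i : Fin (m+1))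
    (y : Fin m → ℝ) :
    ∫ t : ℝ, fderiv ℝ g (i.insertNth t y) (Pi.single i 1) = 0 := by
  set ins : ℝ → (Fin (m+1) → ℝ) := fun t => i.insertNth t y with hins_def
  set ψ : ℝ → ℝ := fun t => g (ins t) with hψ
  have hins : ∀ t : ℝ, HasDerivAt ins (Pi.single i (1:ℝ)) t := by
    intro t
    have heq : ins = Function.update (ins t) i := by
      funext s; exact (Fin.update_insertNth (α := fun _ : Fin (m+1) => ℝ) i t s y).symm
    rw [heq]
    exact hasDerivAt_update _ i t
  have hline : ∀ t : ℝ, HasDerivAt ψ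
      (fderiv ℝ g (ins t) (Pi.single i 1)) t := by
    intro t
    exact ((hg.differentiable one_ne_zero _).hasFDerivAt).comp_hasDerivAt t (hins t)
  have hψC : ContDiff ℝ 1 ψ := by
    apply hg.comp
    apply contDiff_pi.2
    intro j
    refine i.succAboveCases ?_ ?_ j
    · simp only [hins_def, Fin.insertNth_apply_same]
      exact contDiff_id
    · intro k
      simp only [hins_def, Fin.insertNth_apply_succAbove]
      exact contDiff_const
  have hψc : HasCompactSupport ψ := by
    obtain ⟨R, hR⟩ : ∃ R, tsupport g ⊆ Metric.closedBall 0 R :=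
      hgc.isBounded.subset_closedBall 0
    apply HasCompactSupport.intro (isCompact_Icc (a := -R) (b := R))
    intro t ht
    have hts : ins t ∉ tsupport g := by
      intro hmem
      have h1 : ‖ins t‖ ≤ R := by
        simpa [dist_zero_right] using hR hmem
      have h2 : |t| ≤ ‖ins t‖ := by
        have := norm_le_pi_norm (ins t) i
        simpa [hins_def, Real.norm_eq_abs, Fin.insertNth_apply_same] using this
      exact ht (Set.mem_Icc.2 (abs_le.1 (le_trans h2 h1)))
    show g (ins t) = 0
    exact image_eq_zero_of_notMem_tsupport hts
  calc ∫ t : ℝ, fderiv ℝ g (i.insertNth t y) (Pi.single i 1)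
      = ∫ t : ℝ, deriv ψ t := by
        congr 1; funext t; exact ((hline t).deriv).symm
    _ = 0 := hardy_aux_integral_deriv_eq_zero hψC hψc

/-- Integral of a partial derivative of a compactly supported `C¹` function on `ℝⁿ` is zero. -/
lemma hardy_aux_integral_partial {m : ℕ} {g : (Fin (m+1) → ℝ) → ℝ}
    (hg : ContDiff ℝ 1 g) (hgc : HasCompactSupport g) (i : Fin (m+1)) :
    ∫ x : Fin (m+1) → ℝ, fderiv ℝ g x (Pi.single i 1) = 0 := by
  set φ : (Fin (m+1) → ℝ) → ℝ := fun x => fderiv ℝ g x (Pi.single i 1) with hφ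
  have hφcont : Continuous φ :=
    (hg.continuous_fderiv one_ne_zero).clm_apply continuous_const
  have hφc : HasCompactSupport φ :=
    (hgc.fderiv ℝ).comp_left (g := fun L : (Fin (m+1) → ℝ) →L[ℝ] ℝ => L (Pi.single i 1)) rfl
  have hφint : Integrable φ := hφcont.integrable_of_hasCompactSupport hφc
  set e := MeasurableEquiv.piFinSuccAbove (fun _ : Fin (m+1) => ℝ) i with he
  have hmp : MeasurePreserving e volume volume :=
    volume_preserving_piFinSuccAbove (fun _ : Fin (m+1) => ℝ) i
  have hmps : MeasurePreserving e.symm volume volume := MeasurePreserving.symm e hmp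
  have h1 : ∫ x, φ x = ∫ p : ℝ × (Fin m → ℝ), φ (e.symm p) :=
    (hmps.integral_comp' φ).symm
  have hintp : Integrable (fun p : ℝ × (Fin m → ℝ) => φ (e.symm p)) :=
    (hmps.integrable_comp_emb e.symm.measurableEmbedding).2 hφint
  rw [h1, MeasureTheory.Measure.volume_eq_prod,
    MeasureTheory.integral_prod_symm _ (by rwa [← MeasureTheory.Measure.volume_eq_prod])]
  have hinner : ∀ y : Fin m → ℝ, (∫ t : ℝ, φ (e.symm (t, y))) = 0 := by
    intro y
    have hco : ∀ t : ℝ, e.symm (t, y) = i.insertNth t y := by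
      intro t; rfl
    simp only [hco, hφ]
    exact hardy_aux_line_integral hg hgc i y
  simp only [hinner, integral_zero]

/-- Euclidean version of `hardy_aux_integral_partial`. -/
lemma hardy_aux_euclidean_partial {n : ℕ} (hn : n ≠ 0)
    {G : EuclideanSpace ℝ (Fin n) → ℝ}
    (hG : ContDiff ℝ 1 G) (hGc : HasCompactSupport G) (i : Fin n) :
    ∫ x : EuclideanSpace ℝ (Fin n), fderiv ℝ G x (EuclideanSpace.single i 1) = 0 := by
  obtain ⟨m, rfl⟩ : ∃ m, n = m + 1 :=
    ⟨n - 1, (Nat.succ_pred_eq_of_pos (Nat.pos_of_ne_zero hn)).symm⟩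
  set ψ : EuclideanSpace ℝ (Fin (m+1)) ≃L[ℝ] (Fin (m+1) → ℝ) :=
    EuclideanSpace.equiv (Fin (m+1)) ℝ with hψ
  set g : (Fin (m+1) → ℝ) → ℝ := G ∘ ψ.symm with hg
  have hgC : ContDiff ℝ 1 g := hG.comp ψ.symm.contDiff
  have hgc : HasCompactSupport g := hGc.comp_homeomorph ψ.symm.toHomeomorph
  have hfd : ∀ y : Fin (m+1) → ℝ,
      fderiv ℝ g y (Pi.single i 1) = fderiv ℝ G (ψ.symm y) (EuclideanSpace.single i 1) := by
    intro y
    have h1 : fderiv ℝ g y = (fderiv ℝ G (ψ.symm y)).comp (ψ.symm : _ →L[ℝ] _) := by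
      rw [hg, fderiv_comp y (hG.differentiable one_ne_zero _) (ψ.symm.differentiableAt)]
      congr 1
      exact ψ.symm.fderiv
    rw [h1]
    rfl
  have hmp : MeasurePreserving ((MeasurableEquiv.toLp 2 (Fin (m+1) → ℝ)).symm) volume volume :=
    EuclideanSpace.volume_preserving_symm_measurableEquiv_toLp (Fin (m+1))
  have hmps := MeasurePreserving.symm _ hmp
  calc ∫ x : EuclideanSpace ℝ (Fin (m+1)), fderiv ℝ G x (EuclideanSpace.single i 1)
      = ∫ y : Fin (m+1) → ℝ,
          fderiv ℝ G (((MeasurableEquiv.toLp 2 (Fin (m+1) → ℝ)).symm).symm y)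
            (EuclideanSpace.single i 1) :=
        (hmps.integral_comp' _).symm
    _ = ∫ y : Fin (m+1) → ℝ, fderiv ℝ g y (Pi.single i 1) := by
        congr 1; funext y; rw [hfd y]; rfl
    _ = 0 := hardy_aux_integral_partial hgC hgc i

/-- Expanding a vector in the standard basis of Euclidean space, applied to a functional. -/
lemma hardy_aux_sum_single {n : ℕ} (L : EuclideanSpace ℝ (Fin n) →L[ℝ] ℝ)
    (x : EuclideanSpace ℝ (Fin n)) :
    ∑ i, x i * L (EuclideanSpace.single i 1) = L x := by
  have hx : x = ∑ i, x i • EuclideanSpace.single i (1:ℝ) := by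
    have h := (EuclideanSpace.basisFun (Fin n) ℝ).sum_repr x
    simp only [EuclideanSpace.basisFun_repr, EuclideanSpace.basisFun_apply] at h
    exact h.symm
  conv_rhs => rw [hx]
  rw [map_sum]
  simp only [_root_.map_smul, smul_eq_mul]

lemma hardy_aux_sum_sq {n : ℕ} (x : EuclideanSpace ℝ (Fin n)) :
    ∑ i, x i * x i = ‖x‖^2 := by
  rw [← real_inner_self_eq_norm_sq, PiLp.inner_apply]
  simp [RCLike.inner_apply, sq]

/-- Continuity of `f x / ‖x‖²` for `f` vanishing near `0`. -/
lemma hardy_aux_cont {n : ℕ} {f : EuclideanSpace ℝ (Fin n) → ℝ} {ε : ℝ} (hε : 0 < ε)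
    (hf : Continuous f) (h0 : ∀ x ∈ Metric.ball (0 : EuclideanSpace ℝ (Fin n)) ε, f x = 0) :
    Continuous fun x => f x / ‖x‖ ^ 2 := by
  rw [continuous_iff_continuousAt]; intro x
  rcases em (x ∈ Metric.ball (0 : EuclideanSpace ℝ (Fin n)) ε) with hx | hx
  · have hev : (fun y => f y / ‖y‖^2) =ᶠ[nhds x] fun _ => (0:ℝ) := by
      filter_upwards [(Metric.isOpen_ball (x := (0 : EuclideanSpace ℝ (Fin n))) (ε := ε)).mem_nhds hx] with y hy
      simp [h0 y hy]
    exact ContinuousAt.congr continuousAt_const hev.symm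
  · have hx0 : x ≠ 0 := by
      intro h; exact hx (by simpa [h] using Metric.mem_ball_self (x := (0 : EuclideanSpace ℝ (Fin n))) hε)
    exact (hf.continuousAt).div ((continuous_norm.pow 2).continuousAt)
      (pow_ne_zero 2 (norm_ne_zero_iff.2 hx0))

/-- Integrability of `f x / ‖x‖²` for `f` continuous, vanishing near `0` and outside a compact. -/
lemma hardy_aux_integrable {n : ℕ} {f : EuclideanSpace ℝ (Fin n) → ℝ} {ε : ℝ} (hε : 0 < ε)
    (hf : Continuous f) (h0 : ∀ x ∈ Metric.ball (0 : EuclideanSpace ℝ (Fin n)) ε, f x = 0)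
    {K : Set (EuclideanSpace ℝ (Fin n))} (hK : IsCompact K) (hKs : ∀ x ∉ K, f x = 0) :
    Integrable (fun x => f x / ‖x‖ ^ 2) := by
  apply (hardy_aux_cont hε hf h0).integrable_of_hasCompactSupport
  apply HasCompactSupport.intro hK
  intro x hx; simp [hKs x hx]

/-- Key divergence identity for the Hardy inequality. -/
lemma hardy_divergence {n : ℕ} (hn : n ≠ 0) {w : EuclideanSpace ℝ (Fin n) → ℝ}
    (hw : ContDiff ℝ 1 w) (hwc : HasCompactSupport w)
    {ε : ℝ} (hε : 0 < ε)
    (hw0 : ∀ x ∈ Metric.ball (0 : EuclideanSpace ℝ (Fin n)) ε, w x = 0) :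
    ∫ x : EuclideanSpace ℝ (Fin n),
      (fderiv ℝ w x x / ‖x‖^2 + ((n:ℝ) - 2) * (w x / ‖x‖^2)) = 0 := by
  classical
  set g : Fin n → (EuclideanSpace ℝ (Fin n)) → ℝ := fun i x => w x * (‖x‖^2)⁻¹ * x i with hgdef
  have hwev : ∀ x ∈ Metric.ball (0 : (EuclideanSpace ℝ (Fin n))) ε, w =ᶠ[nhds x] fun _ => (0:ℝ) := by
    intro x hx
    filter_upwards [(Metric.isOpen_ball (x := (0 : EuclideanSpace ℝ (Fin n))) (ε := ε)).mem_nhds hx] with y hy using hw0 y hy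
  have hgC : ∀ i, ContDiff ℝ 1 (g i) := by
    intro i
    rw [contDiff_iff_contDiffAt]
    intro x
    rcases em (x ∈ Metric.ball (0 : (EuclideanSpace ℝ (Fin n))) ε) with hx | hx
    · have hev : g i =ᶠ[nhds x] fun _ => (0:ℝ) := by
        filter_upwards [(Metric.isOpen_ball (x := (0 : EuclideanSpace ℝ (Fin n))) (ε := ε)).mem_nhds hx] with y hy
        simp [hgdef, hw0 y hy]
      exact contDiffAt_const.congr_of_eventuallyEq hev
    · have hx0 : x ≠ 0 := fun h => hx (by simpa [h] using Metric.mem_ball_self (x := (0 : EuclideanSpace ℝ (Fin n))) hε)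
      have hr2 : ‖x‖^2 ≠ 0 := pow_ne_zero 2 (norm_ne_zero_iff.2 hx0)
      exact ((hw.contDiffAt.mul
        (((contDiff_norm_sq ℝ (E := EuclideanSpace ℝ (Fin n))).contDiffAt).inv hr2)).mul
        ((EuclideanSpace.proj i : (EuclideanSpace ℝ (Fin n)) →L[ℝ] ℝ).contDiff.contDiffAt))
  have hgc : ∀ i, HasCompactSupport (g i) := by
    intro i
    apply HasCompactSupport.intro hwc
    intro x hx
    simp [hgdef, image_eq_zero_of_notMem_tsupport hx]
  have hterm : ∀ x : (EuclideanSpace ℝ (Fin n)), x ≠ 0 → ∀ i, fderiv ℝ (g i) x (EuclideanSpace.single i 1)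
      = w x * (‖x‖^2)⁻¹
        + x i * (w x * (-((‖x‖^2)⁻¹ * (2 * x i) * (‖x‖^2)⁻¹))
          + (‖x‖^2)⁻¹ * fderiv ℝ w x (EuclideanSpace.single i 1)) := by
    intro x hx i
    have hr2 : ‖x‖^2 ≠ 0 := pow_ne_zero 2 (norm_ne_zero_iff.2 hx)
    have hNsq : HasFDerivAt (fun y : (EuclideanSpace ℝ (Fin n)) => ‖y‖^2) (2 • (innerSL ℝ x)) x :=
      (hasStrictFDerivAt_norm_sq x).hasFDerivAt
    have hInv : HasFDerivAt (fun y : (EuclideanSpace ℝ (Fin n)) => (‖y‖^2)⁻¹)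
        ((-ContinuousLinearMap.mulLeftRight ℝ ℝ (‖x‖^2)⁻¹ (‖x‖^2)⁻¹).comp
          (2 • (innerSL ℝ x))) x :=
      (hasFDerivAt_inv' hr2).comp x hNsq
    have hwD : HasFDerivAt w (fderiv ℝ w x) x := (hw.differentiable one_ne_zero x).hasFDerivAt
    have hq := hwD.mul hInv
    have hproj : HasFDerivAt (fun y : (EuclideanSpace ℝ (Fin n)) => y i) (EuclideanSpace.proj (𝕜 := ℝ) i) x :=
      (EuclideanSpace.proj i : (EuclideanSpace ℝ (Fin n)) →L[ℝ] ℝ).hasFDerivAt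
    have hgi : HasFDerivAt (g i)
        ((w x * (‖x‖^2)⁻¹) • (EuclideanSpace.proj (𝕜 := ℝ) i)
          + x i • (w x • ((-ContinuousLinearMap.mulLeftRight ℝ ℝ (‖x‖^2)⁻¹ (‖x‖^2)⁻¹).comp
              (2 • (innerSL ℝ x))) + (‖x‖^2)⁻¹ • fderiv ℝ w x)) x := hq.mul hproj
    rw [hgi.fderiv]
    have hip : (innerSL ℝ x) (EuclideanSpace.single i (1:ℝ)) = x i := by
      simp [EuclideanSpace.inner_single_right, real_inner_comm]
    simp only [ContinuousLinearMap.add_apply, ContinuousLinearMap.smul_apply,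
      ContinuousLinearMap.comp_apply, ContinuousLinearMap.neg_apply,
      ContinuousLinearMap.mulLeftRight_apply, smul_eq_mul, hip]
    have hproji : (EuclideanSpace.proj (𝕜 := ℝ) i) (EuclideanSpace.single i (1:ℝ)) = 1 := by
      simp
    rw [hproji]
    ring
  have hdiv_pt : ∀ x : (EuclideanSpace ℝ (Fin n)), (∑ i, fderiv ℝ (g i) x (EuclideanSpace.single i 1))
      = fderiv ℝ w x x / ‖x‖^2 + ((n:ℝ) - 2) * (w x / ‖x‖^2) := by
    intro x
    rcases em (x ∈ Metric.ball (0:(EuclideanSpace ℝ (Fin n))) ε) with hx | hx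
    · have hfg : ∀ i, fderiv ℝ (g i) x = 0 := by
        intro i
        have hev : g i =ᶠ[nhds x] fun _ => (0:ℝ) := by
          filter_upwards [(Metric.isOpen_ball (x := (0 : EuclideanSpace ℝ (Fin n))) (ε := ε)).mem_nhds hx] with y hy
          simp [hgdef, hw0 y hy]
        rw [hev.fderiv_eq]
        exact fderiv_const_apply 0
      have hfw : fderiv ℝ w x = 0 := by
        rw [(hwev x hx).fderiv_eq]
        exact fderiv_const_apply 0
      simp [hfg, hfw, hw0 x hx]
    · have hx0 : x ≠ 0 := fun h => hx (by simpa [h] using Metric.mem_ball_self (x := (0 : EuclideanSpace ℝ (Fin n))) hε)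
      have hr2 : ‖x‖^2 ≠ 0 := pow_ne_zero 2 (norm_ne_zero_iff.2 hx0)
      rw [Finset.sum_congr rfl (fun i _ => (hterm x hx0 i).trans (by ring :
        w x * (‖x‖^2)⁻¹
          + x i * (w x * (-((‖x‖^2)⁻¹ * (2 * x i) * (‖x‖^2)⁻¹))
            + (‖x‖^2)⁻¹ * fderiv ℝ w x (EuclideanSpace.single i 1))
        = w x * (‖x‖^2)⁻¹
          + ((-(2 * w x * (‖x‖^2)⁻¹ * (‖x‖^2)⁻¹)) * (x i * x i)
            + (‖x‖^2)⁻¹ * (x i * fderiv ℝ w x (EuclideanSpace.single i 1)))))]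
      rw [Finset.sum_add_distrib, Finset.sum_add_distrib, ← Finset.mul_sum, ← Finset.mul_sum,
        ← Finset.mul_sum, hardy_aux_sum_single (fderiv ℝ w x) x, hardy_aux_sum_sq x,
        Finset.sum_const, Finset.card_univ, Fintype.card_fin, nsmul_eq_mul]
      field_simp
      ring
  have hFint : ∀ i, Integrable (fun x : (EuclideanSpace ℝ (Fin n)) => fderiv ℝ (g i) x (EuclideanSpace.single i 1)) := by
    intro i
    apply Continuous.integrable_of_hasCompactSupport
    · exact ((hgC i).continuous_fderiv one_ne_zero).clm_apply continuous_const
    · exact ((hgc i).fderiv ℝ).comp_left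
        (g := fun L : (EuclideanSpace ℝ (Fin n)) →L[ℝ] ℝ => L (EuclideanSpace.single i 1)) rfl
  calc ∫ x : (EuclideanSpace ℝ (Fin n)), (fderiv ℝ w x x / ‖x‖^2 + ((n:ℝ) - 2) * (w x / ‖x‖^2))
      = ∫ x : (EuclideanSpace ℝ (Fin n)), ∑ i, fderiv ℝ (g i) x (EuclideanSpace.single i 1) := by
        congr 1; funext x; exact (hdiv_pt x).symm
    _ = ∑ i, ∫ x : (EuclideanSpace ℝ (Fin n)), fderiv ℝ (g i) x (EuclideanSpace.single i 1) :=
        integral_finset_sum _ (fun i _ => hFint i)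
    _ = 0 := Finset.sum_eq_zero fun i _ => hardy_aux_euclidean_partial hn (hgC i) (hgc i) i

/-- Sharp Hardy inequality in dimension `n ≥ 3` for smooth compactly supported
complex-valued functions on `ℝⁿ \\ {0}`. -/
theorem sharp_hardy_inequality (n : ℕ) (hn : 3 ≤ n)
    (u : EuclideanSpace ℝ (Fin n) → ℂ)
    (hsmooth : ContDiff ℝ (⊤ : ℕ∞) u) (hcomp : HasCompactSupport u)
    (h0 : (0 : EuclideanSpace ℝ (Fin n)) ∉ tsupport u) :
    (((n : ℝ) - 2) / 2) ^ 2 * ∫ x : EuclideanSpace ℝ (Fin n), ‖u x‖ ^ 2 / ‖x‖ ^ 2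
      ≤ ∫ x : EuclideanSpace ℝ (Fin n), ‖fderiv ℝ u x‖ ^ 2 := by
  classical
  have hn0 : n ≠ 0 := by omega
  have hu1 : ContDiff ℝ 1 u := hsmooth.of_le (by simp)
  have hudiff : Differentiable ℝ u := hu1.differentiable one_ne_zero
  set w : EuclideanSpace ℝ (Fin n) → ℝ :=
    fun x => (u x).re * (u x).re + (u x).im * (u x).im with hwdef
  have hznorm : ∀ z : ℂ, ‖z‖^2 = z.re * z.re + z.im * z.im := by
    intro z
    rw [← Complex.normSq_eq_norm_sq, Complex.normSq_apply]
  have haC : ContDiff ℝ 1 (fun x => (u x).re) := Complex.reCLM.contDiff.comp hu1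
  have hbC : ContDiff ℝ 1 (fun x => (u x).im) := Complex.imCLM.contDiff.comp hu1
  have hwC : ContDiff ℝ 1 w := (haC.mul haC).add (hbC.mul hbC)
  have hwc : HasCompactSupport w := by
    apply HasCompactSupport.intro hcomp
    intro x hx
    simp [hwdef, image_eq_zero_of_notMem_tsupport hx]
  obtain ⟨ε, hε, hball⟩ :
      ∃ ε > 0, Metric.ball (0 : EuclideanSpace ℝ (Fin n)) ε ⊆ (tsupport u)ᶜ := by
    have hmem : (tsupport u)ᶜ ∈ nhds (0 : EuclideanSpace ℝ (Fin n)) :=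
      (isClosed_tsupport u).isOpen_compl.mem_nhds h0
    rcases Metric.mem_nhds_iff.1 hmem with ⟨ε, hε, hsub⟩
    exact ⟨ε, hε, hsub⟩
  have hu0 : ∀ x ∈ Metric.ball (0 : EuclideanSpace ℝ (Fin n)) ε, u x = 0 := fun x hx =>
    image_eq_zero_of_notMem_tsupport (hball hx)
  have hw0 : ∀ x ∈ Metric.ball (0 : EuclideanSpace ℝ (Fin n)) ε, w x = 0 := by
    intro x hx; simp [hwdef, hu0 x hx]
  have hwD : ∀ x, fderiv ℝ w x =
      ((u x).re • (Complex.reCLM.comp (fderiv ℝ u x))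
        + (u x).re • (Complex.reCLM.comp (fderiv ℝ u x)))
      + ((u x).im • (Complex.imCLM.comp (fderiv ℝ u x))
        + (u x).im • (Complex.imCLM.comp (fderiv ℝ u x))) := by
    intro x
    have hA : HasFDerivAt (fun y => (u y).re) (Complex.reCLM.comp (fderiv ℝ u x)) x :=
      Complex.reCLM.hasFDerivAt.comp x (hudiff x).hasFDerivAt
    have hB : HasFDerivAt (fun y => (u y).im) (Complex.imCLM.comp (fderiv ℝ u x)) x :=
      Complex.imCLM.hasFDerivAt.comp x (hudiff x).hasFDerivAt
    have h := (hA.mul hA).add (hB.mul hB)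
    exact h.fderiv
  have hwfx : ∀ x, ∀ v, fderiv ℝ w x v
      = 2 * (u x).re * (fderiv ℝ u x v).re + 2 * (u x).im * (fderiv ℝ u x v).im := by
    intro x v
    rw [hwD x]
    simp only [ContinuousLinearMap.add_apply, ContinuousLinearMap.smul_apply, smul_eq_mul,
      ContinuousLinearMap.coe_comp', Function.comp_apply, Complex.reCLM_apply,
      Complex.imCLM_apply]
    ring
  have hdiv := hardy_divergence hn0 hwC hwc hε hw0
  have hwcont : Continuous w := hwC.continuous
  have hIρ : Integrable (fun x : EuclideanSpace ℝ (Fin n) => w x / ‖x‖^2) :=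
    hardy_aux_integrable hε hwcont hw0 hcomp
      (fun x hx => by simp [hwdef, image_eq_zero_of_notMem_tsupport hx])
  have hNum_cont : Continuous (fun x : EuclideanSpace ℝ (Fin n) => fderiv ℝ w x x) :=
    ((hwC.continuous_fderiv one_ne_zero).clm_apply continuous_id)
  have hNum0 : ∀ x ∈ Metric.ball (0 : EuclideanSpace ℝ (Fin n)) ε, fderiv ℝ w x x = 0 := by
    intro x hx
    have hev : w =ᶠ[nhds x] fun _ => (0:ℝ) := by
      filter_upwards [(Metric.isOpen_ball (x := (0 : EuclideanSpace ℝ (Fin n)))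
        (ε := ε)).mem_nhds hx] with y hy using hw0 y hy
    rw [hev.fderiv_eq]
    simp
  have hNumK : ∀ x ∉ tsupport u, fderiv ℝ w x x = 0 := by
    intro x hx
    have hev : w =ᶠ[nhds x] fun _ => (0:ℝ) := by
      filter_upwards [(isClosed_tsupport u).isOpen_compl.mem_nhds hx] with y hy
      simp [hwdef, image_eq_zero_of_notMem_tsupport hy]
    rw [hev.fderiv_eq]
    simp
  have hIG : Integrable (fun x : EuclideanSpace ℝ (Fin n) => fderiv ℝ w x x / ‖x‖^2) :=
    hardy_aux_integrable hε hNum_cont hNum0 hcomp hNumK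
  have hIfd : Integrable (fun x : EuclideanSpace ℝ (Fin n) => ‖fderiv ℝ u x‖^2) := by
    apply Continuous.integrable_of_hasCompactSupport
    · exact ((hsmooth.continuous_fderiv (by simp)).norm.pow 2)
    · exact (hcomp.fderiv ℝ).comp_left
        (g := fun L : EuclideanSpace ℝ (Fin n) →L[ℝ] ℂ => ‖L‖^2) (by simp)
  have hsplit : (∫ x : EuclideanSpace ℝ (Fin n), fderiv ℝ w x x / ‖x‖^2)
      + ((n:ℝ) - 2) * (∫ x : EuclideanSpace ℝ (Fin n), w x / ‖x‖^2) = 0 := by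
    rw [← integral_const_mul ((n:ℝ) - 2), ← integral_add hIG (hIρ.const_mul _)]
    exact hdiv
  have hpt : ∀ x : EuclideanSpace ℝ (Fin n),
      -(((n:ℝ)-2)/2) * (fderiv ℝ w x x / ‖x‖^2)
        - (((n:ℝ)-2)/2)^2 * (w x / ‖x‖^2) ≤ ‖fderiv ℝ u x‖^2 := by
    intro x
    rcases eq_or_ne x 0 with rfl | hx0
    · have hz : ‖(0 : EuclideanSpace ℝ (Fin n))‖ = 0 := norm_zero
      rw [ContinuousLinearMap.map_zero, hz]
      norm_num
    · have hr2 : (0:ℝ) < ‖x‖^2 := pow_pos (norm_pos_iff.2 hx0) 2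
      have hop : ‖fderiv ℝ u x x‖ ≤ ‖fderiv ℝ u x‖ * ‖x‖ := (fderiv ℝ u x).le_opNorm x
      have hsq : (fderiv ℝ u x x).re * (fderiv ℝ u x x).re
          + (fderiv ℝ u x x).im * (fderiv ℝ u x x).im ≤ ‖fderiv ℝ u x‖^2 * ‖x‖^2 := by
        nlinarith [hznorm (fderiv ℝ u x x), norm_nonneg (fderiv ℝ u x x),
          norm_nonneg (fderiv ℝ u x), norm_nonneg x]
      have key : -(((n:ℝ)-2)/2) * (2 * (u x).re * (fderiv ℝ u x x).re
            + 2 * (u x).im * (fderiv ℝ u x x).im)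
          - (((n:ℝ)-2)/2)^2 * w x ≤ ‖fderiv ℝ u x‖^2 * ‖x‖^2 := by
        simp only [hwdef]
        nlinarith [hsq, sq_nonneg ((fderiv ℝ u x x).re + ((n:ℝ)-2)/2 * (u x).re),
          sq_nonneg ((fderiv ℝ u x x).im + ((n:ℝ)-2)/2 * (u x).im)]
      calc -(((n:ℝ)-2)/2) * (fderiv ℝ w x x / ‖x‖^2) - (((n:ℝ)-2)/2)^2 * (w x / ‖x‖^2)
          = (-(((n:ℝ)-2)/2) * (2 * (u x).re * (fderiv ℝ u x x).re
              + 2 * (u x).im * (fderiv ℝ u x x).im)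
            - (((n:ℝ)-2)/2)^2 * w x) / ‖x‖^2 := by
            rw [hwfx x x]; ring
        _ ≤ ‖fderiv ℝ u x‖^2 := by
            rw [div_le_iff₀ hr2]; exact key
  have hmono : ∫ x : EuclideanSpace ℝ (Fin n),
      (-(((n:ℝ)-2)/2) * (fderiv ℝ w x x / ‖x‖^2) - (((n:ℝ)-2)/2)^2 * (w x / ‖x‖^2))
      ≤ ∫ x : EuclideanSpace ℝ (Fin n), ‖fderiv ℝ u x‖^2 :=
    integral_mono ((hIG.const_mul _).sub (hIρ.const_mul _)) hIfd hpt
  rw [integral_sub (hIG.const_mul _) (hIρ.const_mul _), integral_const_mul,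
    integral_const_mul] at hmono
  have hconv : (∫ x : EuclideanSpace ℝ (Fin n), ‖u x‖^2 / ‖x‖^2)
      = ∫ x : EuclideanSpace ℝ (Fin n), w x / ‖x‖^2 := by
    congr 1; funext x; rw [hznorm (u x)]
  rw [hconv]
  set IG := ∫ x : EuclideanSpace ℝ (Fin n), fderiv ℝ w x x / ‖x‖^2 with hIGdef
  set Iρ := ∫ x : EuclideanSpace ℝ (Fin n), w x / ‖x‖^2 with hIρdef
  have hIGeq : IG = -(((n:ℝ) - 2) * Iρ) := by linarith
  rw [hIGeq] at hmono
  nlinarith [hmono]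
end

section
/- Hölder's inequality in Lorentz spaces: if $1 \le p, p_1, p_2 \le \infty$ and $0 < q, q_1, q_2 \le \infty$ satisfy $1/p = 1/p_1 + 1/p_2$ and $1/q = 1/q_1 + 1/q_2$, then $\|fg\|_{L^{p,q}} \lesssim \|f\|_{L^{p_1,q_1}} \|g\|_{L^{p_2,q_2}}$ for all measurable functions $f, g$, with implicit constant depending only on the exponents. -/
open MeasureTheory ENNReal

/-- The decreasing rearrangement `f^*` of a function, evaluated at `t ∈ ℝ`. -/
noncomputable def rearrangement {α : Type*} [MeasurableSpace α] (μ : Measure α)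
    (f : α → ℂ) (t : ℝ) : ℝ≥0∞ :=
  sInf {l : ℝ≥0∞ | μ {x | l < (‖f x‖₊ : ℝ≥0∞)} ≤ ENNReal.ofReal t}

/-- The Lorentz `L^{p,q}` quasinorm, defined via the decreasing rearrangement. -/
noncomputable def lorentzNorm {α : Type*} [MeasurableSpace α] (μ : Measure α)
    (f : α → ℂ) (p q : ℝ≥0∞) : ℝ≥0∞ :=
  if q = ⊤ then
    ⨆ t : {t : ℝ // 0 < t}, ENNReal.ofReal ((t : ℝ) ^ (1 / p).toReal) * rearrangement μ f t
  else
    (∫⁻ t in Set.Ioi (0 : ℝ),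
        (ENNReal.ofReal (t ^ (1 / p).toReal) * rearrangement μ f t) ^ q.toReal /
          ENNReal.ofReal t) ^ (1 / q.toReal)

/-!
Since `{|fg| > f^*(t) g^*(t)} ⊆ {|f| > f^*(t)} ∪ {|g| > g^*(t)}`, we have
`(fg)^*(2t) ≤ f^*(t) g^*(t)`, hence
`t^{1/p} (fg)^*(2t) ≤ 2^{1/p} · t^{1/p₁} f^*(t) · t^{1/p₂} g^*(t)`.
The Lorentz quasinorm is the `L^q(dt/t)` quasinorm of `t ↦ t^{1/p} f^*(t)` on `(0, ∞)`, and
`dt/t` is invariant under `t ↦ 2t`, so Hölder's inequality in `L^q(dt/t)` gives the claim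
with `C = 2^{1/p}`.
-/

open Set

section Rearrangement

variable {α : Type*} [MeasurableSpace α] {μ : Measure α} {f g : α → ℂ}

lemma rearrangement_antitone : Antitone (rearrangement μ f) :=
  fun _ _ hst => sInf_le_sInf fun _ hl => hl.trans (ENNReal.ofReal_le_ofReal hst)

lemma rearrangement_le {l : ℝ≥0∞} {t : ℝ}
    (h : μ {x | l < (‖f x‖₊ : ℝ≥0∞)} ≤ ENNReal.ofReal t) : rearrangement μ f t ≤ l :=
  sInf_le h

lemma measure_rearrangement_lt_le (t : ℝ) :
    μ {x | rearrangement μ f t < (‖f x‖₊ : ℝ≥0∞)} ≤ ENNReal.ofReal t := by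
  set S := {l : ℝ≥0∞ | μ {x | l < (‖f x‖₊ : ℝ≥0∞)} ≤ ENNReal.ofReal t}
  obtain ⟨u, hu_anti, hu_lim, hu_mem⟩ :=
    exists_seq_tendsto_sInf (S := S) ⟨⊤, by simp [S]⟩ (OrderBot.bddBelow S)
  have hunion : {x | sInf S < (‖f x‖₊ : ℝ≥0∞)} = ⋃ n, {x | u n < (‖f x‖₊ : ℝ≥0∞)} := by
    ext x
    simp only [mem_ofPred_eq, mem_iUnion]
    exact ⟨fun hx => (hu_lim.eventually (gt_mem_nhds hx)).exists,
      fun ⟨n, hn⟩ => (sInf_le (hu_mem n)).trans_lt hn⟩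
  have hmono : Monotone fun n => {x | u n < (‖f x‖₊ : ℝ≥0∞)} :=
    fun m n hmn x hx => (hu_anti hmn).trans_lt hx
  change μ {x | sInf S < _} ≤ _
  rw [hunion, hmono.measure_iUnion]
  exact iSup_le hu_mem

lemma rearrangement_mul_le {s t : ℝ} (hs : 0 ≤ s) (ht : 0 ≤ t) :
    rearrangement μ (fun x => f x * g x) (s + t) ≤
      rearrangement μ f s * rearrangement μ g t := by
  apply rearrangement_le
  have hsub : {x | rearrangement μ f s * rearrangement μ g t < (‖f x * g x‖₊ : ℝ≥0∞)} ⊆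
      {x | rearrangement μ f s < (‖f x‖₊ : ℝ≥0∞)} ∪
        {x | rearrangement μ g t < (‖g x‖₊ : ℝ≥0∞)} := by
    intro x hx
    by_contra hc
    simp only [mem_union, mem_ofPred_eq, not_or, not_lt] at hc
    rw [mem_ofPred_eq, nnnorm_mul, ENNReal.coe_mul] at hx
    exact hx.not_ge (mul_le_mul' hc.1 hc.2)
  calc _ ≤ μ {x | rearrangement μ f s < (‖f x‖₊ : ℝ≥0∞)} +
        μ {x | rearrangement μ g t < (‖g x‖₊ : ℝ≥0∞)} :=
        (measure_mono hsub).trans (measure_union_le _ _)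
    _ ≤ ENNReal.ofReal s + ENNReal.ofReal t :=
        add_le_add (measure_rearrangement_lt_le s) (measure_rearrangement_lt_le t)
    _ = ENNReal.ofReal (s + t) := (ENNReal.ofReal_add hs ht).symm

end Rearrangement

lemma setLIntegral_Ioi_comp_mul_div (h : ℝ → ℝ≥0∞) {c : ℝ} (hc : 0 < c) :
    ∫⁻ t in Ioi 0, h (c * t) / ENNReal.ofReal t = ∫⁻ t in Ioi 0, h t / ENNReal.ofReal t := by
  have hderiv : ∀ t ∈ Ioi (0 : ℝ), HasDerivWithinAt (c * ·) c (Ioi 0) t := fun t _ => by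
    simpa using ((hasDerivAt_id t).const_mul c).hasDerivWithinAt
  conv_rhs => rw [← mul_zero c, ← image_mul_left_Ioi hc,
    lintegral_image_eq_lintegral_abs_deriv_mul measurableSet_Ioi hderiv
      (mul_right_injective₀ hc.ne').injOn]
  refine setLIntegral_congr_fun measurableSet_Ioi fun t ht => ?_
  rw [abs_of_pos hc, ENNReal.ofReal_mul hc.le, ← mul_div_assoc,
    ENNReal.mul_div_mul_left _ _ (ENNReal.ofReal_pos.2 hc).ne' ENNReal.ofReal_ne_top]

noncomputable def mulHaarIoi : Measure ℝ :=
  (volume.restrict (Ioi 0)).withDensity fun t => (ENNReal.ofReal t)⁻¹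

lemma setLIntegral_Ioi_div_eq_lintegral_mulHaarIoi (h : ℝ → ℝ≥0∞) :
    ∫⁻ t in Ioi 0, h t / ENNReal.ofReal t = ∫⁻ t, h t ∂mulHaarIoi := by
  rw [mulHaarIoi, lintegral_withDensity_eq_lintegral_mul_non_measurable _ (by fun_prop)]
  · simp only [Pi.mul_apply, div_eq_mul_inv, mul_comm]
  · filter_upwards [ae_restrict_mem measurableSet_Ioi] with t ht
    exact ENNReal.inv_lt_top.2 (ENNReal.ofReal_pos.2 ht)

/-- The `L^q((0, ∞), dt / t)` quasinorm, except that for `q = ∞` it is the supremum rather than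
the essential supremum. -/
noncomputable def haarLpNorm (Φ : ℝ → ℝ≥0∞) (q : ℝ≥0∞) : ℝ≥0∞ :=
  if q = ⊤ then ⨆ t : {t : ℝ // 0 < t}, Φ t
  else (∫⁻ t in Ioi (0 : ℝ), Φ t ^ q.toReal / ENNReal.ofReal t) ^ (1 / q.toReal)

section HaarLpNorm

variable {Φ Ψ Φ₁ Φ₂ : ℝ → ℝ≥0∞} {q q₁ q₂ : ℝ≥0∞}

lemma haarLpNorm_top : haarLpNorm Φ ⊤ = ⨆ t : {t : ℝ // 0 < t}, Φ t := if_pos rfl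

lemma haarLpNorm_of_ne_top (hq : q ≠ ⊤) :
    haarLpNorm Φ q = (∫⁻ t, Φ t ^ q.toReal ∂mulHaarIoi) ^ (1 / q.toReal) := by
  rw [haarLpNorm, if_neg hq, setLIntegral_Ioi_div_eq_lintegral_mulHaarIoi]

lemma le_haarLpNorm_top {t : ℝ} (ht : 0 < t) : Φ t ≤ haarLpNorm Φ ⊤ :=
  haarLpNorm_top (Φ := Φ) ▸ le_iSup_of_le (⟨t, ht⟩ : {t : ℝ // 0 < t}) le_rfl

lemma haarLpNorm_mono (h : ∀ t, 0 < t → Φ t ≤ Ψ t) : haarLpNorm Φ q ≤ haarLpNorm Ψ q := by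
  rcases eq_or_ne q ⊤ with rfl | hq
  · simp only [haarLpNorm_top]
    exact iSup_mono fun t => h t t.2
  · simp only [haarLpNorm, if_neg hq]
    gcongr ?_ ^ _
    exact setLIntegral_mono' measurableSet_Ioi fun t ht =>
      ENNReal.div_le_div_right (ENNReal.rpow_le_rpow (h t ht) ENNReal.toReal_nonneg) _

lemma haarLpNorm_const_mul (c : ℝ≥0∞) (hΦ : Measurable Φ) (hq : q ≠ 0) :
    haarLpNorm (fun t => c * Φ t) q = c * haarLpNorm Φ q := by
  rcases eq_or_ne q ⊤ with rfl | hq_top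
  · simp only [haarLpNorm_top, ENNReal.mul_iSup]
  have hr : 0 < q.toReal := ENNReal.toReal_pos hq hq_top
  simp only [haarLpNorm_of_ne_top hq_top, ENNReal.mul_rpow_of_nonneg _ _ hr.le]
  rw [lintegral_const_mul _ (hΦ.pow_const _), ENNReal.mul_rpow_of_nonneg _ _ (by positivity),
    ← ENNReal.rpow_mul, mul_one_div_cancel hr.ne', ENNReal.rpow_one]

lemma haarLpNorm_comp_mul {c : ℝ} (hc : 0 < c) :
    haarLpNorm (fun t => Φ (c * t)) q = haarLpNorm Φ q := by
  rcases eq_or_ne q ⊤ with rfl | hq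
  · refine le_antisymm ?_ ?_
    · rw [haarLpNorm_top]
      exact iSup_le fun t => le_haarLpNorm_top (mul_pos hc t.2)
    · rw [haarLpNorm_top]
      refine iSup_le fun t => ?_
      simpa [mul_div_cancel₀ _ hc.ne'] using
        le_haarLpNorm_top (Φ := fun t => Φ (c * t)) (div_pos t.2 hc)
  · simp only [haarLpNorm, if_neg hq]
    rw [setLIntegral_Ioi_comp_mul_div (fun t => Φ t ^ q.toReal) hc]

lemma haarLpNorm_mul_le_top_mul (hΦ₂ : Measurable Φ₂) (hq : q ≠ 0) :
    haarLpNorm (Φ₁ * Φ₂) q ≤ haarLpNorm Φ₁ ⊤ * haarLpNorm Φ₂ q := by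
  rw [← haarLpNorm_const_mul _ hΦ₂ hq]
  exact haarLpNorm_mono fun t ht => mul_le_mul' (le_haarLpNorm_top ht) le_rfl

lemma haarLpNorm_mul_le_of_ne_top (hΦ₁ : Measurable Φ₁) (hΦ₂ : Measurable Φ₂) (hq : 0 < q)
    (hq₁ : q₁ ≠ ⊤) (hq₂ : q₂ ≠ ⊤) (hqe : 1 / q = 1 / q₁ + 1 / q₂) :
    haarLpNorm (Φ₁ * Φ₂) q ≤ haarLpNorm Φ₁ q₁ * haarLpNorm Φ₂ q₂ := by
  have hq_top : q ≠ ⊤ := by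
    rintro rfl
    rw [div_top, eq_comm, add_eq_zero, one_div, ENNReal.inv_eq_zero] at hqe
    exact hq₁ hqe.1
  have hq₁0 : q₁ ≠ 0 := by rintro rfl; simp [hq.ne'] at hqe
  have hq₂0 : q₂ ≠ 0 := by rintro rfl; simp [hq.ne'] at hqe
  have hqq₁ : q < q₁ := by
    rw [← ENNReal.inv_lt_inv, ← one_div, ← one_div, hqe]
    exact ENNReal.lt_add_right (by simpa using hq₁0) (by simpa using hq₂)
  have hqe' : 1 / q.toReal = 1 / q₁.toReal + 1 / q₂.toReal := by
    simpa [ENNReal.toReal_add, hq₁0, hq₂0] using congrArg ENNReal.toReal hqe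
  rw [haarLpNorm_of_ne_top hq_top, haarLpNorm_of_ne_top hq₁, haarLpNorm_of_ne_top hq₂]
  exact ENNReal.lintegral_Lp_mul_le_Lq_mul_Lr (ENNReal.toReal_pos hq.ne' hq_top)
    (ENNReal.toReal_strict_mono hq₁ hqq₁) hqe' _ hΦ₁.aemeasurable hΦ₂.aemeasurable

lemma haarLpNorm_mul_le (hΦ₁ : Measurable Φ₁) (hΦ₂ : Measurable Φ₂) (hq : 0 < q)
    (hqe : 1 / q = 1 / q₁ + 1 / q₂) :
    haarLpNorm (Φ₁ * Φ₂) q ≤ haarLpNorm Φ₁ q₁ * haarLpNorm Φ₂ q₂ := by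
  rcases eq_or_ne q₁ ⊤ with rfl | hq₁
  · obtain rfl : q₂ = q := by simpa using hqe.symm
    exact haarLpNorm_mul_le_top_mul hΦ₂ hq.ne'
  rcases eq_or_ne q₂ ⊤ with rfl | hq₂
  · obtain rfl : q₁ = q := by simpa using hqe.symm
    rw [mul_comm Φ₁, mul_comm (haarLpNorm Φ₁ q₁)]
    exact haarLpNorm_mul_le_top_mul hΦ₁ hq.ne'
  exact haarLpNorm_mul_le_of_ne_top hΦ₁ hΦ₂ hq hq₁ hq₂ hqe

end HaarLpNorm

section LorentzProfile

variable {α : Type*} [MeasurableSpace α] {μ : Measure α} {f g : α → ℂ}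

noncomputable def lorentzProfile (μ : Measure α) (f : α → ℂ) (a t : ℝ) : ℝ≥0∞ :=
  ENNReal.ofReal (t ^ a) * rearrangement μ f t

lemma lorentzNorm_eq_haarLpNorm (p q : ℝ≥0∞) :
    lorentzNorm μ f p q = haarLpNorm (lorentzProfile μ f (1 / p).toReal) q := rfl

lemma measurable_lorentzProfile (a : ℝ) : Measurable (lorentzProfile μ f a) :=
  (ENNReal.measurable_ofReal.comp (measurable_id.pow_const a)).mul
    rearrangement_antitone.measurable

lemma lorentzProfile_mul_le (a₁ a₂ : ℝ) {t : ℝ} (ht : 0 < t) :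
    lorentzProfile μ (fun x => f x * g x) (a₁ + a₂) (2 * t) ≤
      ENNReal.ofReal (2 ^ (a₁ + a₂)) * (lorentzProfile μ f a₁ t * lorentzProfile μ g a₂ t) := by
  have hpow : ENNReal.ofReal ((2 * t) ^ (a₁ + a₂)) =
      ENNReal.ofReal (2 ^ (a₁ + a₂)) * (ENNReal.ofReal (t ^ a₁) * ENNReal.ofReal (t ^ a₂)) := by
    rw [← ENNReal.ofReal_mul (by positivity), ← ENNReal.ofReal_mul (by positivity),
      Real.mul_rpow zero_le_two ht.le, Real.rpow_add ht]
  have hR := rearrangement_mul_le (μ := μ) (f := f) (g := g) ht.le ht.le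
  rw [← two_mul] at hR
  calc lorentzProfile μ _ (a₁ + a₂) (2 * t)
      ≤ ENNReal.ofReal ((2 * t) ^ (a₁ + a₂)) * (rearrangement μ f t * rearrangement μ g t) :=
        mul_le_mul' le_rfl hR
    _ = _ := by rw [hpow, lorentzProfile, lorentzProfile]; ring

end LorentzProfile

theorem lorentz_holder_general (p p₁ p₂ q q₁ q₂ : ℝ≥0∞)
    (hp₁ : 1 ≤ p₁) (hp₂ : 1 ≤ p₂)
    (hq : 0 < q)
    (hpe : 1 / p = 1 / p₁ + 1 / p₂) (hqe : 1 / q = 1 / q₁ + 1 / q₂) :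
    ∃ C : ℝ≥0∞, 0 < C ∧ C ≠ ⊤ ∧
      ∀ (α : Type) [MeasurableSpace α] (μ : Measure α), SigmaFinite μ →
        ∀ f g : α → ℂ, Measurable f → Measurable g →
          lorentzNorm μ (fun x => f x * g x) p q ≤
            C * lorentzNorm μ f p₁ q₁ * lorentzNorm μ g p₂ q₂ := by
  set a₁ := (1 / p₁).toReal
  set a₂ := (1 / p₂).toReal
  have ha : (1 / p).toReal = a₁ + a₂ := by
    rw [hpe, ENNReal.toReal_add] <;>
      simp [(zero_lt_one.trans_le hp₁).ne', (zero_lt_one.trans_le hp₂).ne']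
  refine ⟨ENNReal.ofReal (2 ^ (1 / p).toReal), ENNReal.ofReal_pos.2 (by positivity),
    ENNReal.ofReal_ne_top, fun α _ μ _ f g _ _ => ?_⟩
  set Φ₁ := lorentzProfile μ f a₁
  set Φ₂ := lorentzProfile μ g a₂
  have hΦ₁ : Measurable Φ₁ := measurable_lorentzProfile a₁
  have hΦ₂ : Measurable Φ₂ := measurable_lorentzProfile a₂
  simp only [lorentzNorm_eq_haarLpNorm, ha]
  calc haarLpNorm (lorentzProfile μ (fun x => f x * g x) (a₁ + a₂)) q
      = haarLpNorm (fun t => lorentzProfile μ (fun x => f x * g x) (a₁ + a₂) (2 * t)) q :=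
        (haarLpNorm_comp_mul two_pos).symm
    _ ≤ haarLpNorm (fun t => ENNReal.ofReal (2 ^ (a₁ + a₂)) * (Φ₁ * Φ₂) t) q :=
        haarLpNorm_mono fun t ht => lorentzProfile_mul_le a₁ a₂ ht
    _ = ENNReal.ofReal (2 ^ (a₁ + a₂)) * haarLpNorm (Φ₁ * Φ₂) q :=
        haarLpNorm_const_mul _ (hΦ₁.mul hΦ₂) hq.ne'
    _ ≤ ENNReal.ofReal (2 ^ (a₁ + a₂)) * (haarLpNorm Φ₁ q₁ * haarLpNorm Φ₂ q₂) :=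
        mul_le_mul' le_rfl (haarLpNorm_mul_le hΦ₁ hΦ₂ hq hqe)
    _ = _ := (mul_assoc _ _ _).symm

/-- Hölder's inequality in Lorentz spaces: if `1/p = 1/p₁ + 1/p₂` and
`1/q = 1/q₁ + 1/q₂`, then `‖fg‖_{L^{p,q}} ≲ ‖f‖_{L^{p₁,q₁}} ‖g‖_{L^{p₂,q₂}}`,
with constant depending only on the exponents. -/
theorem lorentz_holder (p p₁ p₂ q q₁ q₂ : ℝ≥0∞)
    (hp : 1 ≤ p) (hp₁ : 1 ≤ p₁) (hp₂ : 1 ≤ p₂)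
    (hq : 0 < q) (hq₁ : 0 < q₁) (hq₂ : 0 < q₂)
    (hpe : 1 / p = 1 / p₁ + 1 / p₂) (hqe : 1 / q = 1 / q₁ + 1 / q₂) :
    ∃ C : ℝ≥0∞, 0 < C ∧ C ≠ ⊤ ∧
      ∀ (α : Type) [MeasurableSpace α] (μ : Measure α), SigmaFinite μ →
        ∀ f g : α → ℂ, Measurable f → Measurable g →
          lorentzNorm μ (fun x => f x * g x) p q ≤
            C * lorentzNorm μ f p₁ q₁ * lorentzNorm μ g p₂ q₂ :=
  lorentz_holder_general p p₁ p₂ q q₁ q₂ hp₁ hp₂ hq hpe hqe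
end
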